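/- Let f : ℝ → ℂ be bounded and twice differentiable with bounded second derivative, and define the sequence σ_n = f(√n) for n ∈ ℕ₀. Then σ ∈ d_Δ; that is, σ is bounded and sup_{m∈ℕ₀} m·|σ_{m+2} − 2σ_{m+1} + σ_m| < ∞ (equivalently, sup_{n≥1} n·|σ_{n+1} − 2σ_n + σ_{n−1}| < ∞). -/

import Mathlib

/-! With `a = √m`, `b = √(m+1)`, `c = √(m+2)`, expand `f` to first order around `b`:
`σ_{m+2} − 2σ_{m+1} + σ_m` is two Taylor remainders, each `O(B (c−b)²) = O(B/m)`, plus
`(a + c − 2b) f'(b)`. Since `√` is concave, `0 ≤ 2b − a − c ≤ 1/(4 m^{3/2})`, and `f'` has at most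
linear growth because `f''` is bounded, so this last term is `O(√m / m^{3/2}) = O(1/m)` as well. -/

section Taylor

variable {E : Type*} [NormedAddCommGroup E] [NormedSpace ℝ E] {f f' f'' : ℝ → E} {B : ℝ}

theorem norm_sub_le_of_forall_hasDerivAt_of_norm_le (hf : ∀ x, HasDerivAt f (f' x) x)
    (hB : ∀ x, ‖f' x‖ ≤ B) (x y : ℝ) : ‖f y - f x‖ ≤ B * |y - x| := by
  simpa [Real.norm_eq_abs] using Convex.norm_image_sub_le_of_norm_hasDerivWithin_le
    (fun z _ => (hf z).hasDerivWithinAt) (fun z _ => hB z) convex_univ (Set.mem_univ x)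
    (Set.mem_univ y)

theorem norm_sub_sub_smul_le_of_lipschitz_deriv (hf : ∀ x, HasDerivAt f (f' x) x)
    (hlip : ∀ x y, ‖f' y - f' x‖ ≤ B * |y - x|) (x y : ℝ) :
    ‖f y - f x - (y - x) • f' x‖ ≤ B * (y - x) ^ 2 := by
  have hB : 0 ≤ B := by simpa using (norm_nonneg _).trans (hlip 0 1)
  set g : ℝ → E := fun z => f z - f x - (z - x) • f' x
  have hg : ∀ z, HasDerivAt g (f' z - f' x) z := fun z =>
    ((hf z).sub_const (f x)).sub
      ((((hasDerivAt_id z).sub_const x).smul_const (f' x)).congr_deriv (one_smul ℝ _))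
  have key := Convex.norm_image_sub_le_of_norm_hasDerivWithin_le
    (fun z _ => (hg z).hasDerivWithinAt)
    (fun z hz => (hlip x z).trans
      (mul_le_mul_of_nonneg_left (Set.abs_sub_left_of_mem_uIcc hz) hB))
    (convex_uIcc x y) Set.left_mem_uIcc Set.right_mem_uIcc
  calc ‖g y‖ = ‖g y - g x‖ := by simp [g]
    _ ≤ B * |y - x| * |y - x| := by simpa [Real.norm_eq_abs] using key
    _ = B * (y - x) ^ 2 := by rw [mul_assoc, ← abs_mul, abs_mul_self]; ring

theorem norm_second_difference_le (hf : ∀ x, HasDerivAt f (f' x) x)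
    (hlip : ∀ x y, ‖f' y - f' x‖ ≤ B * |y - x|) (a b c : ℝ) :
    ‖(f c - f b) - (f b - f a)‖
      ≤ B * (c - b) ^ 2 + B * (a - b) ^ 2 + |a + c - 2 * b| * ‖f' b‖ := by
  have hsplit : (f c - f b) - (f b - f a)
      = (f c - f b - (c - b) • f' b) + (f a - f b - (a - b) • f' b)
        + (a + c - 2 * b) • f' b := by
    rw [show a + c - 2 * b = (c - b) + (a - b) by ring, add_smul]; abel
  rw [hsplit, ← Real.norm_eq_abs, ← norm_smul]
  exact norm_add₃_le.trans (add_le_add_three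
    (norm_sub_sub_smul_le_of_lipschitz_deriv hf hlip b c)
    (norm_sub_sub_smul_le_of_lipschitz_deriv hf hlip b a) le_rfl)

end Taylor

section SqrtDifferences

open Real

theorem mul_sq_sqrt_add_one_sub_sqrt_le {x : ℝ} (hx : 0 ≤ x) :
    x * (√(x + 1) - √x) ^ 2 ≤ 1 / 4 := by
  have ha := sq_sqrt hx
  have hb := sq_sqrt (by linarith : 0 ≤ x + 1)
  have hab : √x ≤ √(x + 1) := sqrt_le_sqrt (by linarith)
  have hprod : (√(x + 1) - √x) * (√(x + 1) + √x) = 1 := by linear_combination hb - ha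
  have h : 2 * √x * (√(x + 1) - √x) ≤ 1 := by nlinarith [sqrt_nonneg x]
  nlinarith [mul_nonneg (sqrt_nonneg x) (sub_nonneg.2 hab)]

theorem sqrt_second_difference_mul_add_mul_add (x : ℝ) (hx : 0 ≤ x) :
    (2 * √(x + 1) - √x - √(x + 2)) * ((√x + √(x + 1)) * (√(x + 1) + √(x + 2)))
      = √(x + 2) - √x := by
  have ha := sq_sqrt hx
  have hb := sq_sqrt (by linarith : 0 ≤ x + 1)
  have hc := sq_sqrt (by linarith : 0 ≤ x + 2)
  linear_combination (√(x + 1) + √(x + 2)) * (hb - ha) - (√x + √(x + 1)) * (hc - hb)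

theorem sqrt_second_difference_nonneg {x : ℝ} (hx : 0 < x) :
    0 ≤ 2 * √(x + 1) - √x - √(x + 2) := by
  have hpos : 0 < (√x + √(x + 1)) * (√(x + 1) + √(x + 2)) := by positivity
  have hac : √x ≤ √(x + 2) := sqrt_le_sqrt (by linarith)
  have := sqrt_second_difference_mul_add_mul_add x hx.le
  nlinarith

theorem mul_sqrt_mul_sqrt_second_difference_le {x : ℝ} (hx : 0 < x) :
    x * √x * (2 * √(x + 1) - √x - √(x + 2)) ≤ 1 / 4 := by
  set a := √x
  set b := √(x + 1)
  set c := √(x + 2)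
  have ha : a ^ 2 = x := sq_sqrt hx.le
  have hc : c ^ 2 = x + 2 := sq_sqrt (by linarith)
  have hab : a ≤ b := sqrt_le_sqrt (by linarith)
  have hbc : b ≤ c := sqrt_le_sqrt (by linarith)
  have ha0 : 0 ≤ a := sqrt_nonneg x
  have hd := sqrt_second_difference_nonneg hx
  -- `(c - a)(c + a) = 2` gives `a (c - a) ≤ 1`, and `(a + b)(b + c) ≥ 4 a²`
  have hca : a * (c - a) ≤ 1 := by nlinarith
  have hgrow : 4 * a ^ 2 ≤ (a + b) * (b + c) := by nlinarith
  have hid := sqrt_second_difference_mul_add_mul_add x hx.le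
  rw [← ha]
  nlinarith [mul_le_mul_of_nonneg_left hgrow (mul_nonneg ha0 hd)]

end SqrtDifferences

open Real in
theorem mul_norm_second_difference_comp_sqrt_le {f f' f'' : ℝ → ℂ} {A B : ℝ}
    (hf' : ∀ x, HasDerivAt f (f' x) x) (hf'' : ∀ x, HasDerivAt f' (f'' x) x)
    (hB : ∀ x, ‖f'' x‖ ≤ B) (hA : ‖f' 0‖ ≤ A) {x : ℝ} (hx : 1 ≤ x) :
    x * ‖(f √(x + 2) - f √(x + 1)) - (f √(x + 1) - f √x)‖ ≤ A / 4 + B := by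
  have hlip := norm_sub_le_of_forall_hasDerivAt_of_norm_le hf'' hB
  have hB0 : 0 ≤ B := (norm_nonneg _).trans (hB 0)
  have ha1 : 1 ≤ √x := one_le_sqrt.2 hx
  have hba : √(x + 1) ≤ √x + 1 := by
    rw [sqrt_le_left (by positivity)]; nlinarith [sq_sqrt (by linarith : 0 ≤ x)]
  have hf'b : ‖f' √(x + 1)‖ ≤ A + B * (√x + 1) := by
    have := hlip 0 √(x + 1)
    rw [sub_zero, abs_of_nonneg (sqrt_nonneg _)] at this
    nlinarith [norm_sub_norm_le (f' √(x + 1)) (f' 0)]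
  have hd := sqrt_second_difference_nonneg (by linarith : 0 < x)
  have hcurv := mul_sqrt_mul_sqrt_second_difference_le (by linarith : 0 < x)
  have hcb : x * (√(x + 1 + 1) - √(x + 1)) ^ 2 ≤ 1 / 4 :=
    (mul_le_mul_of_nonneg_right (by linarith) (sq_nonneg _)).trans
      (mul_sq_sqrt_add_one_sub_sqrt_le (by linarith))
  have hab : x * (√x - √(x + 1)) ^ 2 ≤ 1 / 4 := by
    rw [← neg_sub, neg_sq]; exact mul_sq_sqrt_add_one_sub_sqrt_le (by linarith)
  have hfirst : x * (2 * √(x + 1) - √x - √(x + 2)) * ‖f' √(x + 1)‖ ≤ A / 4 + B / 2 := by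
    have h4 : 4 * (x * (2 * √(x + 1) - √x - √(x + 2))) * √x ≤ 1 := by nlinarith
    have hA0 : 0 ≤ A := (norm_nonneg _).trans hA
    have hprod := mul_le_mul_of_nonneg_left hf'b (mul_nonneg (by linarith : (0 : ℝ) ≤ x) hd)
    nlinarith [mul_nonneg (mul_nonneg (by linarith : (0 : ℝ) ≤ x) hd) (sub_nonneg.2 ha1)]
  have hsecond := norm_second_difference_le hf' hlip √x √(x + 1) √(x + 2)
  rw [abs_of_nonpos (by linarith), show x + 2 = x + 1 + 1 by ring] at hsecond
  rw [show x + 2 = x + 1 + 1 by ring] at hfirst ⊢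
  nlinarith

/-- STATEMENT 16: if `f : ℝ → ℂ` is bounded and twice differentiable with bounded second
derivative, then the sequence `σ_n = f(√n)` belongs to `d_Δ`: it is bounded and
`sup_m m·|σ_{m+2} − 2σ_{m+1} + σ_m| < ∞`. -/
theorem statement16 (f : ℝ → ℂ) (hfb : ∃ C, ∀ x : ℝ, ‖f x‖ ≤ C)
    (f' f'' : ℝ → ℂ) (hf' : ∀ x : ℝ, HasDerivAt f (f' x) x)
    (hf'' : ∀ x : ℝ, HasDerivAt f' (f'' x) x)
    (hf''b : ∃ C, ∀ x : ℝ, ‖f'' x‖ ≤ C)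
    (σ : ℕ → ℂ) (hσ : ∀ k : ℕ, σ k = f (Real.sqrt k)) :
    (∃ C, ∀ k : ℕ, ‖σ k‖ ≤ C)
    ∧ ∃ C, ∀ m : ℕ, (m : ℝ) * ‖σ (m + 2) - 2 * σ (m + 1) + σ m‖ ≤ C := by
  obtain ⟨Cf, hCf⟩ := hfb
  obtain ⟨B, hB⟩ := hf''b
  refine ⟨⟨Cf, fun k => hσ k ▸ hCf _⟩, ⟨‖f' 0‖ / 4 + B, fun m => ?_⟩⟩
  rcases Nat.eq_zero_or_pos m with rfl | hm
  · simpa using add_nonneg (div_nonneg (norm_nonneg (f' 0)) zero_le_four)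
      ((norm_nonneg _).trans (hB 0))
  have hsplit : σ (m + 2) - 2 * σ (m + 1) + σ m
      = (f √((m : ℝ) + 2) - f √((m : ℝ) + 1)) - (f √((m : ℝ) + 1) - f √(m : ℝ)) := by
    simp only [hσ]; push_cast; ring
  rw [hsplit]
  exact mul_norm_second_difference_comp_sqrt_le hf' hf'' hB le_rfl (by exact_mod_cast hm)
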